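/- For every R > 0 there exists μ = μ(R) > 0 such that for all X, Y ∈ ℝ^{n×2} with ‖X‖ ≤ R and ‖Y‖ ≤ R one has det(B(X) − B(Y)) ≤ −μ·‖B(X) − B(Y)‖². -/

import Mathlib

open Matrix BigOperators

noncomputable section

/-- Frobenius inner product of matrices. -/
def frobInner {m k : ℕ} (X Y : Matrix (Fin m) (Fin k) ℝ) : ℝ :=
  ∑ i, ∑ j, X i j * Y i j

/-- Frobenius norm of a matrix. -/
def frobNorm {m k : ℕ} (X : Matrix (Fin m) (Fin k) ℝ) : ℝ :=
  Real.sqrt (frobInner X X)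

/-- The area integrand `𝒜(X) = √(1 + ‖X‖² + det(XᵀX))`. -/
def Area {n : ℕ} (X : Matrix (Fin n) (Fin 2) ℝ) : ℝ :=
  Real.sqrt (1 + frobInner X X + (Xᵀ * X).det)

/-- The symplectic matrix `J = [[0,1],[−1,0]]`. -/
def symJ : Matrix (Fin 2) (Fin 2) ℝ := !![0, 1; -1, 0]

/-- The gradient of a function on matrix space, given by entrywise partial derivatives. -/
def grad {n : ℕ} (f : Matrix (Fin n) (Fin 2) ℝ → ℝ) (X : Matrix (Fin n) (Fin 2) ℝ) :
    Matrix (Fin n) (Fin 2) ℝ :=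
  fun i j => deriv (fun t : ℝ => f (X + t • Matrix.single i j 1)) 0

/-- `A(X) = D𝒜(X)J`. -/
def matA {n : ℕ} (X : Matrix (Fin n) (Fin 2) ℝ) : Matrix (Fin n) (Fin 2) ℝ :=
  grad Area X * symJ

/-- `B(X) = XᵀD𝒜(X)J − 𝒜(X)J`. -/
def matB {n : ℕ} (X : Matrix (Fin n) (Fin 2) ℝ) : Matrix (Fin 2) (Fin 2) ℝ :=
  Xᵀ * grad Area X * symJ - Area X • symJ

/-!
With `G = XᵀX` and `τ = 1 + tr G`, the derivative of `𝒜² = 1 + tr G + det G` in direction `E` is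
`2 tr(Eᵀ X (1 + adj G))`, so `D𝒜(X) = X (1 + adj G) / 𝒜(X)` and, since `G adj G = det G`,
`B(X) = (G - τ) J / 𝒜(X)`. This is traceless with determinant `(1 + tr G + det G) / 𝒜² = 1`
and `B₁₀ - B₀₁ = (1 + τ) / 𝒜 > 0`.

In the coordinates `s = (P₁₀ - P₀₁)/2`, `r = (P₁₀ + P₀₁)/2`, `w = P₁₁` of a traceless `P`,
`det P = s² - r² - w²` and `‖P‖² = 2(s² + r² + w²)`: the matrices `B(X)` lie on the upper sheet
`s = √(1 + r² + w²)` of a hyperboloid. That sheet is uniformly spacelike on bounded sets: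
`(s₁ + s₂)(s₁ - s₂) = ⟨(r₁ + r₂, w₁ + w₂), (r₁ - r₂, w₁ - w₂)⟩` and
`(s₁ + s₂)² ≥ |(r₁ + r₂, w₁ + w₂)|² + 2`, so by Cauchy–Schwarz `(s₁ - s₂)²` is at most a fixed
fraction `< 1` of `(r₁ - r₂)² + (w₁ - w₂)²`, which makes `det(B(X) - B(Y))` negative definite.
-/

section Frobenius
variable {m k : ℕ}

lemma frobInner_self_eq_trace (X : Matrix (Fin m) (Fin k) ℝ) :
    frobInner X X = (Xᵀ * X).trace := by
  simp only [frobInner, Matrix.trace, Matrix.diag, Matrix.mul_apply, Matrix.transpose_apply]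
  exact Finset.sum_comm

lemma frobInner_self_nonneg (X : Matrix (Fin m) (Fin k) ℝ) : 0 ≤ frobInner X X :=
  Finset.sum_nonneg fun _ _ => Finset.sum_nonneg fun _ _ => mul_self_nonneg _

lemma frobNorm_sq (X : Matrix (Fin m) (Fin k) ℝ) : frobNorm X ^ 2 = frobInner X X :=
  Real.sq_sqrt (frobInner_self_nonneg X)

lemma frobNorm_nonneg (X : Matrix (Fin m) (Fin k) ℝ) : 0 ≤ frobNorm X :=
  Real.sqrt_nonneg _

end Frobenius

section Gram
variable {ι κ : Type*} [Fintype ι]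

lemma det_transpose_mul_self_nonneg [Fintype κ] [DecidableEq κ] (X : Matrix ι κ ℝ) :
    0 ≤ (Xᵀ * X).det := by
  simpa using (Matrix.posSemidef_conjTranspose_mul_self X).det_nonneg

lemma transpose_mul_self_add_smul (X E : Matrix ι κ ℝ) (t : ℝ) :
    (X + t • E)ᵀ * (X + t • E) = Xᵀ * X + t • (Eᵀ * X + Xᵀ * E) + t ^ 2 • (Eᵀ * E) := by
  simp only [transpose_add, transpose_smul, Matrix.add_mul, Matrix.mul_add, Matrix.smul_mul,
    Matrix.mul_smul]
  module

lemma hasDerivAt_transpose_mul_self_add_smul_apply (X E : Matrix ι κ ℝ) (p q : κ) :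
    HasDerivAt (fun t : ℝ => ((X + t • E)ᵀ * (X + t • E)) p q) ((Eᵀ * X + Xᵀ * E) p q) 0 := by
  simp only [transpose_mul_self_add_smul, Matrix.add_apply, Matrix.smul_apply, smul_eq_mul]
  exact ((((hasDerivAt_id' (0:ℝ)).mul_const _).const_add _).fun_add
    ((hasDerivAt_pow 2 (0:ℝ)).mul_const _)).congr_deriv (by simp)

lemma trace_add_trace_adjugate_mul [Fintype κ] [DecidableEq κ] (X E : Matrix ι κ ℝ) :
    (Eᵀ * X + Xᵀ * E).trace + (adjugate (Xᵀ * X) * (Eᵀ * X + Xᵀ * E)).trace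
      = 2 * (Eᵀ * (X * (1 + adjugate (Xᵀ * X)))).trace := by
  set A := adjugate (Xᵀ * X)
  have hA : Aᵀ = A := by rw [adjugate_transpose, transpose_mul, transpose_transpose]
  have h1 : (Xᵀ * E).trace = (Eᵀ * X).trace := by
    rw [← trace_transpose, transpose_mul, transpose_transpose]
  have h2 : (A * (Xᵀ * E)).trace = (Eᵀ * X * A).trace := by
    rw [← trace_transpose, transpose_mul, transpose_mul, hA, transpose_transpose, Matrix.mul_assoc]
  have h3 : (A * (Eᵀ * X)).trace = (Eᵀ * X * A).trace := trace_mul_comm _ _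
  rw [Matrix.mul_add, trace_add, trace_add, h1, h2, h3, Matrix.mul_add, Matrix.mul_one,
    Matrix.mul_add, trace_add, ← Matrix.mul_assoc]
  ring

end Gram

section Area
variable {n : ℕ}

lemma one_add_frobInner_add_det_pos (X : Matrix (Fin n) (Fin 2) ℝ) :
    0 < 1 + frobInner X X + (Xᵀ * X).det := by
  linarith [frobInner_self_nonneg X, det_transpose_mul_self_nonneg X]

lemma area_sq (X : Matrix (Fin n) (Fin 2) ℝ) :
    Area X ^ 2 = 1 + (Xᵀ * X).trace + (Xᵀ * X).det := by
  rw [Area, Real.sq_sqrt (one_add_frobInner_add_det_pos X).le, frobInner_self_eq_trace]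

lemma one_le_area (X : Matrix (Fin n) (Fin 2) ℝ) : 1 ≤ Area X :=
  Real.one_le_sqrt.mpr (by linarith [frobInner_self_nonneg X, det_transpose_mul_self_nonneg X])

lemma area_pos (X : Matrix (Fin n) (Fin 2) ℝ) : 0 < Area X :=
  zero_lt_one.trans_le (one_le_area X)

lemma hasDerivAt_area_add_smul (X E : Matrix (Fin n) (Fin 2) ℝ) :
    HasDerivAt (fun t : ℝ => Area (X + t • E))
      ((Eᵀ * (X * (1 + adjugate (Xᵀ * X)))).trace / Area X) 0 := by
  have hG := hasDerivAt_transpose_mul_self_add_smul_apply X E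
  have hsq : HasDerivAt (fun t : ℝ => 1 + frobInner (X + t • E) (X + t • E)
      + ((X + t • E)ᵀ * (X + t • E)).det) (2 * (Eᵀ * (X * (1 + adjugate (Xᵀ * X)))).trace) 0 := by
    rw [← trace_add_trace_adjugate_mul]
    simp only [frobInner_self_eq_trace, trace_fin_two, det_fin_two]
    refine ((((hG 0 0).fun_add (hG 1 1)).const_add 1).fun_add
      (((hG 0 0).fun_mul (hG 1 1)).fun_sub ((hG 0 1).fun_mul (hG 1 0)))).congr_deriv ?_
    simp only [Matrix.add_apply, Matrix.mul_apply, transpose_apply, zero_smul, add_zero,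
      adjugate_fin_two, of_apply, cons_val', cons_val_fin_one, cons_val_zero, Fin.sum_univ_two,
      cons_val_one]
    ring
  have h := hsq.sqrt (by simpa using (one_add_frobInner_add_det_pos X).ne')
  simp only [zero_smul, add_zero, mul_div_mul_left _ _ (two_ne_zero (α := ℝ))] at h
  exact h

end Area

lemma hyperboloid_sub_sq_le {s₁ r₁ w₁ s₂ r₂ w₂ M : ℝ}
    (h₁ : s₁ ^ 2 = 1 + r₁ ^ 2 + w₁ ^ 2) (h₂ : s₂ ^ 2 = 1 + r₂ ^ 2 + w₂ ^ 2)
    (hs₁ : 0 ≤ s₁) (hs₂ : 0 ≤ s₂) (hM : (r₁ + r₂) ^ 2 + (w₁ + w₂) ^ 2 ≤ M) :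
    (M + 2) * (s₁ - s₂) ^ 2 ≤ M * ((r₁ - r₂) ^ 2 + (w₁ - w₂) ^ 2) := by
  set P := (r₁ + r₂) ^ 2 + (w₁ + w₂) ^ 2
  set D := (r₁ - r₂) ^ 2 + (w₁ - w₂) ^ 2
  have hdiff : (s₁ + s₂) * (s₁ - s₂) = (r₁ + r₂) * (r₁ - r₂) + (w₁ + w₂) * (w₁ - w₂) := by
    linear_combination h₁ - h₂
  have hCS : ((s₁ + s₂) * (s₁ - s₂)) ^ 2 ≤ P * D := by
    rw [hdiff]
    nlinarith [sq_nonneg ((r₁ + r₂) * (w₁ - w₂) - (w₁ + w₂) * (r₁ - r₂))]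
  have hcross : r₁ * r₂ + w₁ * w₂ ≤ s₁ * s₂ := by
    refine le_trans (le_abs_self _) (abs_le_of_sq_le_sq ?_ (mul_nonneg hs₁ hs₂))
    rw [mul_pow, h₁, h₂]
    nlinarith [sq_nonneg (r₁ * w₂ - w₁ * r₂), sq_nonneg r₁, sq_nonneg r₂, sq_nonneg w₁,
      sq_nonneg w₂]
  have hsum : P + 2 ≤ (s₁ + s₂) ^ 2 := by nlinarith
  have hPD : (P + 2) * (s₁ - s₂) ^ 2 ≤ P * D := by
    nlinarith [sq_nonneg (s₁ - s₂)]
  have hD : (s₁ - s₂) ^ 2 ≤ D := by nlinarith [sq_nonneg (r₁ + r₂), sq_nonneg (w₁ + w₂)]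
  nlinarith

lemma frobInner_self_of_trace_eq_zero_of_det_eq_one {P : Matrix (Fin 2) (Fin 2) ℝ}
    (htr : P.trace = 0) (hdet : P.det = 1) : frobInner P P = (P 1 0 - P 0 1) ^ 2 - 2 := by
  rw [trace_fin_two] at htr
  rw [det_fin_two] at hdet
  simp only [frobInner, Fin.sum_univ_two]
  linear_combination (P 0 0 + P 1 1) * htr - 2 * hdet

lemma det_sub_le_of_trace_eq_zero_of_det_eq_one {P Q : Matrix (Fin 2) (Fin 2) ℝ} {K : ℝ}
    (hPtr : P.trace = 0) (hQtr : Q.trace = 0) (hPdet : P.det = 1) (hQdet : Q.det = 1)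
    (hP : P 0 1 ≤ P 1 0) (hQ : Q 0 1 ≤ Q 1 0) (hPK : frobNorm P ≤ K) (hQK : frobNorm Q ≤ K) :
    (P - Q).det ≤ -(1 / (4 * (K ^ 2 + 1))) * frobNorm (P - Q) ^ 2 := by
  have hPK2 : frobInner P P ≤ K ^ 2 := by
    rw [← frobNorm_sq]; exact pow_le_pow_left₀ (frobNorm_nonneg P) hPK 2
  have hQK2 : frobInner Q Q ≤ K ^ 2 := by
    rw [← frobNorm_sq]; exact pow_le_pow_left₀ (frobNorm_nonneg Q) hQK 2
  rw [trace_fin_two] at hPtr hQtr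
  rw [det_fin_two] at hPdet hQdet
  simp only [frobInner, Fin.sum_univ_two] at hPK2 hQK2
  have key := hyperboloid_sub_sq_le (M := 2 * K ^ 2)
    (s₁ := (P 1 0 - P 0 1) / 2) (r₁ := (P 1 0 + P 0 1) / 2) (w₁ := P 1 1)
    (s₂ := (Q 1 0 - Q 0 1) / 2) (r₂ := (Q 1 0 + Q 0 1) / 2) (w₂ := Q 1 1)
    (by linear_combination hPdet - P 1 1 * hPtr) (by linear_combination hQdet - Q 1 1 * hQtr)
    (by linarith) (by linarith)
    (by nlinarith [sq_nonneg (P 1 0 + P 0 1 - Q 1 0 - Q 0 1), sq_nonneg (P 1 1 - Q 1 1),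
      sq_nonneg (P 1 0 - P 0 1), sq_nonneg (Q 1 0 - Q 0 1)])
  set ds := (P 1 0 - P 0 1) / 2 - (Q 1 0 - Q 0 1) / 2
  set dr := (P 1 0 + P 0 1) / 2 - (Q 1 0 + Q 0 1) / 2
  set dw := P 1 1 - Q 1 1
  have hdet : (P - Q).det = ds ^ 2 - dr ^ 2 - dw ^ 2 := by
    rw [det_fin_two]
    simp only [Matrix.sub_apply, ds, dr, dw]
    linear_combination (P 1 1 - Q 1 1) * (hPtr - hQtr)
  have hnorm : frobNorm (P - Q) ^ 2 = 2 * (ds ^ 2 + dr ^ 2 + dw ^ 2) := by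
    rw [frobNorm_sq]
    simp only [frobInner, Fin.sum_univ_two, Matrix.sub_apply, ds, dr, dw]
    linear_combination (P 0 0 - Q 0 0 - P 1 1 + Q 1 1) * (hPtr - hQtr)
  rw [hdet, hnorm]
  field_simp
  nlinarith [sq_nonneg K, sq_nonneg ds]

section MatB
variable {n : ℕ}

lemma grad_area (X : Matrix (Fin n) (Fin 2) ℝ) :
    grad Area X = (Area X)⁻¹ • (X * (1 + adjugate (Xᵀ * X))) := by
  ext i j
  rw [grad, (hasDerivAt_area_add_smul X _).deriv, transpose_single, trace_single_mul]
  simp [div_eq_inv_mul]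

lemma matB_eq (X : Matrix (Fin n) (Fin 2) ℝ) :
    matB X = (Area X)⁻¹ • ((Xᵀ * X - (1 + (Xᵀ * X).trace) • 1) * symJ) := by
  have hA : Area X • symJ = (Area X)⁻¹ • ((1 + (Xᵀ * X).trace + (Xᵀ * X).det) • symJ) := by
    rw [← area_sq, smul_smul, inv_mul_eq_div, sq, mul_div_cancel_right₀ _ (area_pos X).ne']
  rw [matB, grad_area, hA, Matrix.mul_smul, ← Matrix.mul_assoc, Matrix.mul_add, Matrix.mul_one,
    mul_adjugate]
  simp only [Matrix.smul_mul, Matrix.add_mul, Matrix.sub_mul, Matrix.one_mul]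
  module

lemma matB_eq_entries (X : Matrix (Fin n) (Fin 2) ℝ) :
    matB X = (Area X)⁻¹ •
      !![-(Xᵀ * X) 0 1, -(1 + (Xᵀ * X) 1 1); 1 + (Xᵀ * X) 0 0, (Xᵀ * X) 1 0] := by
  rw [matB_eq]
  congr 1
  ext i j
  fin_cases i <;> fin_cases j <;>
    simp only [trace_fin_two, symJ, Matrix.mul_apply, Fin.sum_univ_two, Matrix.sub_apply,
      Matrix.smul_apply, smul_eq_mul, of_apply, cons_val', cons_val_zero, cons_val_one,
      cons_val_fin_one, Fin.zero_eta, Fin.mk_one, one_apply_eq, one_apply_ne, ne_eq, zero_ne_one,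
      one_ne_zero, not_false_eq_true] <;>
    ring

lemma trace_matB (X : Matrix (Fin n) (Fin 2) ℝ) : (matB X).trace = 0 := by
  have : (Xᵀ * X) 1 0 = (Xᵀ * X) 0 1 := by simp [Matrix.mul_apply, mul_comm]
  simp [matB_eq_entries, trace_fin_two, this]

lemma det_matB (X : Matrix (Fin n) (Fin 2) ℝ) : (matB X).det = 1 := by
  have h := area_sq X
  rw [trace_fin_two, det_fin_two] at h
  rw [matB_eq_entries, det_smul, det_fin_two_of, Fintype.card_fin, inv_pow,
    inv_mul_eq_one₀ (pow_ne_zero 2 (area_pos X).ne'), h]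
  ring

lemma matB_one_zero_sub_zero_one (X : Matrix (Fin n) (Fin 2) ℝ) :
    matB X 1 0 - matB X 0 1 = (2 + frobInner X X) / Area X := by
  rw [matB_eq_entries, frobInner_self_eq_trace, trace_fin_two]
  simp only [Matrix.smul_apply, of_apply, cons_val', cons_val_zero, cons_val_fin_one,
    cons_val_one, smul_eq_mul]
  ring

lemma matB_zero_one_le_one_zero (X : Matrix (Fin n) (Fin 2) ℝ) : matB X 0 1 ≤ matB X 1 0 := by
  have := area_pos X
  have := frobInner_self_nonneg X
  exact sub_nonneg.mp (by rw [matB_one_zero_sub_zero_one]; positivity)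

lemma frobNorm_matB_le (X : Matrix (Fin n) (Fin 2) ℝ) : frobNorm (matB X) ≤ 2 + frobNorm X ^ 2 := by
  have hpos : 0 ≤ 2 + frobInner X X := by linarith [frobInner_self_nonneg X]
  rw [frobNorm, frobInner_self_of_trace_eq_zero_of_det_eq_one (trace_matB X) (det_matB X),
    matB_one_zero_sub_zero_one, frobNorm_sq]
  calc √(((2 + frobInner X X) / Area X) ^ 2 - 2)
      ≤ √(((2 + frobInner X X) / Area X) ^ 2) := Real.sqrt_le_sqrt (by linarith)
    _ = (2 + frobInner X X) / Area X := Real.sqrt_sq (div_nonneg hpos (area_pos X).le)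
    _ ≤ 2 + frobInner X X := div_le_self hpos (one_le_area X)

end MatB

theorem matB_det_diff_neg_general {n : ℕ} (R : ℝ) :
    ∃ μ : ℝ, 0 < μ ∧ ∀ X Y : Matrix (Fin n) (Fin 2) ℝ, frobNorm X ≤ R → frobNorm Y ≤ R →
      (matB X - matB Y).det ≤ -μ * frobNorm (matB X - matB Y) ^ 2 := by
  have hB : ∀ Z : Matrix (Fin n) (Fin 2) ℝ, frobNorm Z ≤ R → frobNorm (matB Z) ≤ 2 + R ^ 2 :=
    fun Z hZ => (frobNorm_matB_le Z).trans (by gcongr; exact frobNorm_nonneg Z)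
  exact ⟨1 / (4 * ((2 + R ^ 2) ^ 2 + 1)), by positivity, fun X Y hX hY =>
    det_sub_le_of_trace_eq_zero_of_det_eq_one (trace_matB X) (trace_matB Y) (det_matB X)
      (det_matB Y) (matB_zero_one_le_one_zero X) (matB_zero_one_le_one_zero Y) (hB X hX) (hB Y hY)⟩

/-- For every `R > 0` there exists `μ = μ(R) > 0` such that for all `X, Y ∈ ℝ^{n×2}`
with `‖X‖ ≤ R` and `‖Y‖ ≤ R` one has `det(B(X) − B(Y)) ≤ −μ·‖B(X) − B(Y)‖²`. -/
theorem matB_det_diff_neg {n : ℕ} (hn : 1 ≤ n) (R : ℝ) (hR : 0 < R) :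
    ∃ μ : ℝ, 0 < μ ∧ ∀ X Y : Matrix (Fin n) (Fin 2) ℝ, frobNorm X ≤ R → frobNorm Y ≤ R →
      (matB X - matB Y).det ≤ -μ * frobNorm (matB X - matB Y) ^ 2 :=
  matB_det_diff_neg_general R

end
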